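/- arXiv:1503.01986 — 3 statements merged into one kernel-verified Lean document; each statement's English description precedes it below -/
import Mathlib

section
/- The Legendre–Fenchel conjugate of the Monge–Kantorovich cost is the characteristic function of the dual feasibility polytope: for every (u,v) ∈ ℝ^{Ma}×ℝ^{Mb}, the supremum over (a,b) ∈ S of ⟨a,u⟩ + ⟨b,v⟩ − MK(a,b) equals 0 if u_i + v_j ≤ C_{ij} for all i,j, and equals +∞ otherwise. -/
/-!
Weak duality gives `⟨a,u⟩ + ⟨b,v⟩ ≤ MK(a,b)` whenever `u_i + v_j ≤ C_{ij}`, so the conjugate is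
at most `0` there. Since `MK` is positively homogeneous, the set of values
`⟨a,u⟩ + ⟨b,v⟩ - MK(a,b)` is a cone in `ℝ`, whose supremum is `0` or `+∞` according to whether it
contains a positive element. If `u_{i₀} + v_{j₀} > C_{i₀j₀}`, any strictly positive plan `P`
close to the point mass at `(i₀, j₀)` yields such an element: with `a`, `b` the marginals of `P`,
the value is at least `∑ P_{ij} (u_i + v_j - C_{ij}) > 0`.
-/

open scoped BigOperators

/-- The transport polytope `P(a,b)`: nonnegative matrices with row sums `a`
and column sums `b`. -/
def transportPolytope {Ma Mb : ℕ} (a : Fin Ma → ℝ) (b : Fin Mb → ℝ) :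
    Set (Matrix (Fin Ma) (Fin Mb) ℝ) :=
  {P | (∀ i j, 0 ≤ P i j) ∧ (∀ i, ∑ j, P i j = a i) ∧ (∀ j, ∑ i, P i j = b j)}

/-- The transport cost `⟨P, C⟩ = ∑_{i,j} P_{ij} C_{ij}`. -/
def transportCost {Ma Mb : ℕ} (C P : Matrix (Fin Ma) (Fin Mb) ℝ) : ℝ :=
  ∑ i, ∑ j, P i j * C i j

/-- The Monge–Kantorovich cost `MK(a,b) = inf_{P ∈ P(a,b)} ⟨P,C⟩`. -/
noncomputable def MK {Ma Mb : ℕ} (C : Matrix (Fin Ma) (Fin Mb) ℝ)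
    (a : Fin Ma → ℝ) (b : Fin Mb → ℝ) : ℝ :=
  sInf (transportCost C '' transportPolytope a b)

open Filter Topology
open scoped Pointwise

section Transport

variable {Ma Mb : ℕ} {a : Fin Ma → ℝ} {b : Fin Mb → ℝ} {P : Matrix (Fin Ma) (Fin Mb) ℝ}

lemma transportCost_sub (C D P : Matrix (Fin Ma) (Fin Mb) ℝ) :
    transportCost (C - D) P = transportCost C P - transportCost D P := by
  simp only [transportCost, Matrix.sub_apply, mul_sub, Finset.sum_sub_distrib]

lemma transportCost_smul (t : ℝ) (C P : Matrix (Fin Ma) (Fin Mb) ℝ) :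
    transportCost C (t • P) = t * transportCost C P := by
  simp only [transportCost, Matrix.smul_apply, smul_eq_mul, Finset.mul_sum, mul_assoc]

lemma transportCost_potential (hP : P ∈ transportPolytope a b) (u : Fin Ma → ℝ)
    (v : Fin Mb → ℝ) :
    transportCost (Matrix.of fun i j => u i + v j) P = ∑ i, a i * u i + ∑ j, b j * v j := by
  obtain ⟨-, hrow, hcol⟩ := hP
  have hu : ∑ i, ∑ j, P i j * u i = ∑ i, a i * u i :=
    Finset.sum_congr rfl fun i _ => by rw [← Finset.sum_mul, hrow i]
  have hv : ∑ i, ∑ j, P i j * v j = ∑ j, b j * v j := by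
    rw [Finset.sum_comm]
    exact Finset.sum_congr rfl fun j _ => by rw [← Finset.sum_mul, hcol j]
  simp only [transportCost, Matrix.of_apply, mul_add, Finset.sum_add_distrib, hu, hv]

lemma sum_mul_add_sum_mul_le_transportCost {C : Matrix (Fin Ma) (Fin Mb) ℝ}
    {u : Fin Ma → ℝ} {v : Fin Mb → ℝ} (hdual : ∀ i j, u i + v j ≤ C i j)
    (hP : P ∈ transportPolytope a b) :
    ∑ i, a i * u i + ∑ j, b j * v j ≤ transportCost C P := by
  rw [← transportCost_potential hP]
  exact Finset.sum_le_sum fun i _ => Finset.sum_le_sum fun j _ =>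
    mul_le_mul_of_nonneg_left (hdual i j) (hP.1 i j)

lemma bddBelow_transportCost_image (C : Matrix (Fin Ma) (Fin Mb) ℝ) (a : Fin Ma → ℝ)
    (b : Fin Mb → ℝ) : BddBelow (transportCost C '' transportPolytope a b) := by
  refine ⟨_, Set.forall_mem_image.2 fun P hP =>
    sum_mul_add_sum_mul_le_transportCost (u := fun i => ⨅ j, C i j) (v := 0) (fun i j => ?_) hP⟩
  simpa using ciInf_le (Set.finite_range (C i)).bddBelow j

lemma transportPolytope_nonempty (ha : 0 ≤ a) (hb : 0 ≤ b) (hs : ∑ i, a i = ∑ j, b j) :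
    (transportPolytope a b).Nonempty := by
  by_cases h0 : ∑ i, a i = 0
  · have ha0 : a = 0 := funext fun i =>
      (Finset.sum_eq_zero_iff_of_nonneg fun i _ => ha i).1 h0 i (Finset.mem_univ i)
    have hb0 : b = 0 := funext fun j =>
      (Finset.sum_eq_zero_iff_of_nonneg fun j _ => hb j).1 (hs ▸ h0) j (Finset.mem_univ j)
    exact ⟨0, by simp [transportPolytope, ha0, hb0]⟩
  · refine ⟨fun i j => a i * b j / ∑ i, a i,
      fun i j => div_nonneg (mul_nonneg (ha i) (hb j)) (Finset.sum_nonneg fun i _ => ha i),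
      fun i => ?_, fun j => ?_⟩
    · rw [← Finset.sum_div, ← Finset.mul_sum, ← hs, mul_div_cancel_right₀ _ h0]
    · rw [← Finset.sum_div, ← Finset.sum_mul, mul_div_cancel_left₀ _ h0]

lemma MK_le_transportCost (C : Matrix (Fin Ma) (Fin Mb) ℝ) (hP : P ∈ transportPolytope a b) :
    MK C a b ≤ transportCost C P :=
  csInf_le (bddBelow_transportCost_image C a b) ⟨P, hP, rfl⟩

lemma sum_mul_add_sum_mul_le_MK {C : Matrix (Fin Ma) (Fin Mb) ℝ} {u : Fin Ma → ℝ}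
    {v : Fin Mb → ℝ} (hdual : ∀ i j, u i + v j ≤ C i j)
    (hne : (transportPolytope a b).Nonempty) :
    ∑ i, a i * u i + ∑ j, b j * v j ≤ MK C a b :=
  le_csInf (hne.image _) <| by
    rintro _ ⟨P, hP, rfl⟩
    exact sum_mul_add_sum_mul_le_transportCost hdual hP

lemma smul_mem_transportPolytope {t : ℝ} (ht : 0 ≤ t) (hP : P ∈ transportPolytope a b) :
    t • P ∈ transportPolytope (t • a) (t • b) := by
  obtain ⟨hnonneg, hrow, hcol⟩ := hP
  refine ⟨fun i j => mul_nonneg ht (hnonneg i j), fun i => ?_, fun j => ?_⟩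
  · simp [← Finset.mul_sum, hrow]
  · simp [← Finset.mul_sum, hcol]

lemma transportPolytope_smul {t : ℝ} (ht : 0 < t) :
    transportPolytope (t • a) (t • b) = t • transportPolytope a b := by
  ext Q
  rw [Set.mem_smul_set_iff_inv_smul_mem₀ ht.ne']
  constructor
  · intro hQ
    simpa [inv_smul_smul₀ ht.ne'] using smul_mem_transportPolytope (inv_nonneg.2 ht.le) hQ
  · intro hQ
    simpa [smul_inv_smul₀ ht.ne'] using smul_mem_transportPolytope ht.le hQ

lemma MK_smul (C : Matrix (Fin Ma) (Fin Mb) ℝ) {t : ℝ} (ht : 0 < t) :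
    MK C (t • a) (t • b) = t * MK C a b := by
  rw [MK, transportPolytope_smul ht, Set.image_smul_comm _ _ _ fun P => transportCost_smul t C P,
    Real.sInf_smul_of_nonneg ht.le, smul_eq_mul, MK]

end Transport

namespace EReal

lemma sSup_image_coe_eq_zero_of_cone {X : Set ℝ} (hne : X.Nonempty)
    (hcone : ∀ x ∈ X, ∀ t : ℝ, 0 < t → t * x ∈ X) (hX : ∀ x ∈ X, x ≤ 0) :
    sSup (((↑) : ℝ → EReal) '' X) = 0 := by
  refine le_antisymm (sSup_le <| Set.forall_mem_image.2 fun x hx => by exact_mod_cast hX x hx) ?_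
  obtain ⟨x, hx⟩ := hne
  have hlim : Tendsto (fun t : ℝ => ((t * x : ℝ) : EReal)) (𝓝[>] 0) (𝓝 0) :=
    ((continuous_coe_real_ereal.comp (continuous_mul_const x)).tendsto' 0 0 (by simp)).mono_left
      nhdsWithin_le_nhds
  exact le_of_tendsto hlim <| eventually_mem_nhdsWithin.mono fun t ht =>
    le_sSup ⟨_, hcone x hx t ht, rfl⟩

lemma sSup_image_coe_eq_top_of_cone {X : Set ℝ}
    (hcone : ∀ x ∈ X, ∀ t : ℝ, 0 < t → t * x ∈ X) (hpos : ∃ x ∈ X, 0 < x) :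
    sSup (((↑) : ℝ → EReal) '' X) = ⊤ := by
  obtain ⟨x, hx, hx0⟩ := hpos
  refine sSup_eq_top.2 fun y hy => ?_
  obtain ⟨r, hyr, -⟩ := exists_between_coe_real hy
  refine ⟨_, ⟨_, hcone x hx ((|r| + 1) / x) (by positivity), rfl⟩, hyr.trans ?_⟩
  rw [div_mul_cancel₀ _ hx0.ne']
  exact_mod_cast (le_abs_self r).trans_lt (lt_add_one _)

end EReal

section Conjugate

variable {Ma Mb : ℕ} {C : Matrix (Fin Ma) (Fin Mb) ℝ} {u : Fin Ma → ℝ} {v : Fin Mb → ℝ}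

def conjugateValues (C : Matrix (Fin Ma) (Fin Mb) ℝ) (u : Fin Ma → ℝ) (v : Fin Mb → ℝ) :
    Set ℝ :=
  {x | ∃ (a : Fin Ma → ℝ) (b : Fin Mb → ℝ), (∀ i, 0 < a i) ∧ (∀ j, 0 < b j) ∧
    (∑ i, a i = ∑ j, b j) ∧ x = ∑ i, a i * u i + ∑ j, b j * v j - MK C a b}

lemma conjugateValues_nonempty (hMa : 0 < Ma) (hMb : 0 < Mb) :
    (conjugateValues C u v).Nonempty :=
  ⟨_, fun _ => Mb, fun _ => Ma, fun _ => Nat.cast_pos.2 hMb, fun _ => Nat.cast_pos.2 hMa,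
    by simp [mul_comm], rfl⟩

lemma mul_mem_conjugateValues {x t : ℝ} (hx : x ∈ conjugateValues C u v) (ht : 0 < t) :
    t * x ∈ conjugateValues C u v := by
  obtain ⟨a, b, ha, hb, hs, rfl⟩ := hx
  refine ⟨t • a, t • b, fun i => mul_pos ht (ha i), fun j => mul_pos ht (hb j),
    by simp [← Finset.mul_sum, hs], ?_⟩
  simp only [MK_smul C ht, Pi.smul_apply, smul_eq_mul, mul_assoc, ← Finset.mul_sum]
  ring

lemma conjugateValues_nonpos (hdual : ∀ i j, u i + v j ≤ C i j) :
    ∀ x ∈ conjugateValues C u v, x ≤ 0 := by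
  rintro _ ⟨a, b, ha, hb, hs, rfl⟩
  exact sub_nonpos.2 <| sum_mul_add_sum_mul_le_MK hdual <|
    transportPolytope_nonempty (fun i => (ha i).le) (fun j => (hb j).le) hs

lemma exists_mem_conjugateValues_ge [Nonempty (Fin Ma)] [Nonempty (Fin Mb)]
    {P : Matrix (Fin Ma) (Fin Mb) ℝ} (hP : ∀ i j, 0 < P i j) :
    ∃ x ∈ conjugateValues C u v, transportCost ((Matrix.of fun i j => u i + v j) - C) P ≤ x := by
  have hmem : P ∈ transportPolytope (fun i => ∑ j, P i j) (fun j => ∑ i, P i j) :=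
    ⟨fun i j => (hP i j).le, fun _ => rfl, fun _ => rfl⟩
  refine ⟨_, ⟨_, _, fun i => Finset.sum_pos (fun j _ => hP i j) Finset.univ_nonempty,
    fun j => Finset.sum_pos (fun i _ => hP i j) Finset.univ_nonempty, Finset.sum_comm, rfl⟩, ?_⟩
  rw [transportCost_sub, transportCost_potential hmem]
  linarith [MK_le_transportCost C hmem]

lemma exists_pos_mem_conjugateValues (h : ¬ ∀ i j, u i + v j ≤ C i j) :
    ∃ x ∈ conjugateValues C u v, 0 < x := by
  push Not at h
  obtain ⟨i₀, j₀, hgap⟩ := h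
  have : Nonempty (Fin Ma) := ⟨i₀⟩
  have : Nonempty (Fin Mb) := ⟨j₀⟩
  set D : Matrix (Fin Ma) (Fin Mb) ℝ := (Matrix.of fun i j => u i + v j) - C
  set K := transportCost D (Matrix.of fun _ _ => 1)
  have hD : 0 < D i₀ j₀ := by simp [D, hgap]
  have hcost : ∀ ε : ℝ, transportCost D (Matrix.of fun i j => ε + if i = i₀ ∧ j = j₀ then 1 else 0)
      = ε * K + D i₀ j₀ := by
    intro ε
    simp [K, transportCost, add_mul, Finset.sum_add_distrib, Finset.mul_sum, ite_and]
  have hlim : Tendsto (fun ε : ℝ => ε * K + D i₀ j₀) (𝓝[>] 0) (𝓝 (D i₀ j₀)) :=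
    (((continuous_mul_const K).add continuous_const).tendsto' 0 _ (by simp [D])).mono_left
      nhdsWithin_le_nhds
  obtain ⟨ε, hε, hpos⟩ := (eventually_mem_nhdsWithin.and (hlim.eventually (lt_mem_nhds hD))).exists
  obtain ⟨x, hx, hle⟩ := exists_mem_conjugateValues_ge
    (P := Matrix.of fun i j => ε + if i = i₀ ∧ j = j₀ then 1 else 0)
    fun i j => add_pos_of_pos_of_nonneg hε (by split_ifs <;> norm_num)
  exact ⟨x, hx, by linarith [hcost ε]⟩

end Conjugate

/-- The Legendre–Fenchel conjugate of the Monge–Kantorovich cost, taken over the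
admissible set `S`, is the characteristic function of the dual feasibility
polytope `{(u,v) : u_i + v_j ≤ C_{ij}}`: it equals `0` on that polytope and
`+∞` outside of it. -/
theorem MK_conjugate_eq_characteristic (Ma Mb : ℕ) (hMa : 0 < Ma) (hMb : 0 < Mb)
    (C : Matrix (Fin Ma) (Fin Mb) ℝ)
    (u : Fin Ma → ℝ) (v : Fin Mb → ℝ) :
    ((∀ i j, u i + v j ≤ C i j) →
      sSup {x : EReal | ∃ (a : Fin Ma → ℝ) (b : Fin Mb → ℝ),
          (∀ i, 0 < a i) ∧ (∀ j, 0 < b j) ∧ (∑ i, a i = ∑ j, b j) ∧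
          x = ((∑ i, a i * u i + ∑ j, b j * v j - MK C a b : ℝ) : EReal)} = 0) ∧
    (¬ (∀ i j, u i + v j ≤ C i j) →
      sSup {x : EReal | ∃ (a : Fin Ma → ℝ) (b : Fin Mb → ℝ),
          (∀ i, 0 < a i) ∧ (∀ j, 0 < b j) ∧ (∑ i, a i = ∑ j, b j) ∧
          x = ((∑ i, a i * u i + ∑ j, b j * v j - MK C a b : ℝ) : EReal)} = ⊤) := by
  have hvalues : {x : EReal | ∃ (a : Fin Ma → ℝ) (b : Fin Mb → ℝ),
      (∀ i, 0 < a i) ∧ (∀ j, 0 < b j) ∧ (∑ i, a i = ∑ j, b j) ∧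
      x = ((∑ i, a i * u i + ∑ j, b j * v j - MK C a b : ℝ) : EReal)} =
      (↑) '' conjugateValues C u v := by
    ext x
    constructor
    · rintro ⟨a, b, ha, hb, hs, rfl⟩
      exact ⟨_, ⟨a, b, ha, hb, hs, rfl⟩, rfl⟩
    · rintro ⟨_, ⟨a, b, ha, hb, hs, rfl⟩, rfl⟩
      exact ⟨a, b, ha, hb, hs, rfl⟩
  have hcone : ∀ x ∈ conjugateValues C u v, ∀ t : ℝ, 0 < t → t * x ∈ conjugateValues C u v :=
    fun _ hx _ ht => mul_mem_conjugateValues hx ht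
  rw [hvalues]
  exact ⟨fun hdual => EReal.sSup_image_coe_eq_zero_of_cone (conjugateValues_nonempty hMa hMb)
      hcone (conjugateValues_nonpos hdual),
    fun hgap => EReal.sSup_image_coe_eq_top_of_cone hcone (exists_pos_mem_conjugateValues hgap)⟩
end

section
/- (Proposition 2) Let F : ℝ^{Ma}×ℝ^{Mb} → ℝ be defined by F(u,v) = (N/λ)·s(u,v) if s(u,v) ≤ 1 and F(u,v) = (N/λ)·log s(u,v) + N/λ if s(u,v) ≥ 1, where s(u,v) = ∑_{i,j} e^{λ(u_i + v_j − C_{ij}) − 1}. Then the gradient of F is Lipschitz continuous with constant at most 2λN: for all X, X' ∈ ℝ^{Ma}×ℝ^{Mb}, ‖∇F(X) − ∇F(X')‖ ≤ 2λN·‖X − X'‖ (Euclidean norms). -/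
open scoped BigOperators

/-- `s(u,v) = ∑_{k,l} e^{λ(u_k + v_l − C_{kl}) − 1}`, with `(u,v)` encoded as a
point of the Euclidean space `ℝ^{Ma+Mb}` indexed by `Fin Ma ⊕ Fin Mb`. -/
noncomputable def sQE {Ma Mb : ℕ} (C : Matrix (Fin Ma) (Fin Mb) ℝ) (lam : ℝ)
    (x : EuclideanSpace ℝ (Fin Ma ⊕ Fin Mb)) : ℝ :=
  ∑ i, ∑ j, Real.exp (lam * (x (Sum.inl i) + x (Sum.inr j) - C i j) - 1)

/-- The conjugate `F` of the normalized Sinkhorn distance, as a function on the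
Euclidean space `ℝ^{Ma+Mb}`: `F = (N/λ)·s` where `s ≤ 1`, and
`(N/λ)·log s + N/λ` where `s ≥ 1`. -/
noncomputable def FconjE {Ma Mb : ℕ} (C : Matrix (Fin Ma) (Fin Mb) ℝ) (lam N : ℝ)
    (x : EuclideanSpace ℝ (Fin Ma ⊕ Fin Mb)) : ℝ :=
  if sQE C lam x ≤ 1 then (N / lam) * sQE C lam x
  else (N / lam) * Real.log (sQE C lam x) + N / lam

/-!
Write `s(x) = ∑ₚ exp (⟪aₚ, x⟫ + bₚ)` with `a₍ᵢ,ⱼ₎ = λ (eᵢ + eⱼ)`, so that `‖aₚ‖ = √2 λ`, and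
`F = (N/λ) ψ ∘ s` with `ψ t = t` for `t ≤ 1` and `ψ t = log t + 1` for `t ≥ 1`. Hence
`∇F = (N/λ) min 1 s⁻¹ ∇s`. On the convex set `{s ≤ 1}` the Hessian of `s` is `∑ₚ wₚ aₚ aₚᵀ`,
of norm at most `s ‖a‖²_∞ ≤ 2λ²`; everywhere, the Hessian of `log s` is the covariance of the
vectors `aₚ` under the Gibbs weights `wₚ / s`, of norm at most its trace, hence at most `2λ²`.
A segment joining the two regions crosses the level set `{s = 1}`, and the two Lipschitz bounds
add up along it. The constant is `(N/λ) · 2λ² = 2λN`.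
-/

open Real Set
open scoped NNReal RealInnerProductSpace

theorem LipschitzOnWith.congr {α β : Type*} [PseudoEMetricSpace α] [PseudoEMetricSpace β]
    {f g : α → β} {s : Set α} {K : ℝ≥0} (hf : LipschitzOnWith K f s) (hfg : EqOn f g s) :
    LipschitzOnWith K g s := fun x hx y hy => by
  rw [← hfg hx, ← hfg hy]; exact hf hx hy

theorem LipschitzWith.of_lipschitzOnWith_le_ge {E F : Type*} [NormedAddCommGroup E]
    [NormedSpace ℝ E] [PseudoMetricSpace F] {f : E → F} {g : E → ℝ} {K : ℝ≥0} {c : ℝ}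
    (hg : Continuous g) (hle : LipschitzOnWith K f {x | g x ≤ c})
    (hge : LipschitzOnWith K f {x | c ≤ g x}) : LipschitzWith K f := by
  have crossing : ∀ x y, g x ≤ c → c ≤ g y → dist (f x) (f y) ≤ K * dist x y := by
    intro x y hx hy
    obtain ⟨z, hz, hgz⟩ := (convex_segment x y).isPreconnected.intermediate_value
      (left_mem_segment ℝ x y) (right_mem_segment ℝ x y) hg.continuousOn ⟨hx, hy⟩
    calc dist (f x) (f y) ≤ dist (f x) (f z) + dist (f z) (f y) := dist_triangle _ _ _
      _ ≤ K * dist x z + K * dist z y :=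
        add_le_add (hle.dist_le_mul x hx z hgz.le) (hge.dist_le_mul z hgz.ge y hy)
      _ = K * dist x y := by rw [← mul_add, dist_add_dist_of_mem_segment hz]
  refine LipschitzWith.of_dist_le_mul fun x y => ?_
  rcases le_total (g x) c with hx | hx <;> rcases le_total (g y) c with hy | hy
  · exact hle.dist_le_mul x hx y hy
  · exact crossing x y hx hy
  · rw [dist_comm, dist_comm x]; exact crossing y x hy hx
  · exact hge.dist_le_mul x hx y hy

noncomputable def linLog (t : ℝ) : ℝ := if t ≤ 1 then t else log t + 1

theorem hasDerivAt_linLog {t : ℝ} (ht : 0 < t) : HasDerivAt linLog (min 1 t⁻¹) t := by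
  rcases lt_trichotomy t 1 with hlt | rfl | hgt
  · rw [min_eq_left (one_le_inv_iff₀.2 ⟨ht, hlt.le⟩)]
    refine (hasDerivAt_id t).congr_of_eventuallyEq ?_
    filter_upwards [eventually_lt_nhds hlt] with u hu
    simp [linLog, hu.le]
  · rw [inv_one, min_self, ← hasDerivWithinAt_univ, ← Iic_union_Ici (a := 1)]
    refine HasDerivWithinAt.union ?_ ?_
    · exact (hasDerivAt_id 1).hasDerivWithinAt.congr (fun u hu => if_pos hu) (if_pos le_rfl)
    · have hlog := ((hasDerivAt_log one_ne_zero).add_const 1).hasDerivWithinAt (s := Ici 1)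
      rw [inv_one] at hlog
      refine hlog.congr (fun u hu => ?_) (by simp [linLog])
      rcases (mem_Ici.1 hu).eq_or_lt with rfl | hu
      · simp [linLog]
      · simp [linLog, not_le.2 hu]
  · rw [min_eq_right (inv_le_one_of_one_le₀ hgt.le)]
    refine ((hasDerivAt_log ht.ne').add_const 1).congr_of_eventuallyEq ?_
    filter_upwards [eventually_gt_nhds hgt] with u hu
    simp [linLog, not_le.2 hu]

section ExpSum

variable {E : Type*} [NormedAddCommGroup E] [InnerProductSpace ℝ E] {P : Type*} [Fintype P]

theorem norm_sum_smul_inner_smul_le {w : P → ℝ} (hw : ∀ p, 0 ≤ w p) (v : P → E) (h : E) :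
    ‖∑ p, w p • (⟪v p, h⟫ • v p)‖ ≤ (∑ p, w p * ‖v p‖ ^ 2) * ‖h‖ := by
  rw [Finset.sum_mul]
  refine (norm_sum_le _ _).trans (Finset.sum_le_sum fun p _ => ?_)
  rw [norm_smul, norm_smul, Real.norm_of_nonneg (hw p), mul_assoc]
  refine mul_le_mul_of_nonneg_left ?_ (hw p)
  calc ‖⟪v p, h⟫‖ * ‖v p‖ ≤ ‖v p‖ * ‖h‖ * ‖v p‖ := by gcongr; exact norm_inner_le_norm _ _
    _ = ‖v p‖ ^ 2 * ‖h‖ := by ring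

theorem norm_sum_smul_inner_smul_sub_le {w : P → ℝ} (hw : ∀ p, 0 ≤ w p) (hw₁ : ∑ p, w p = 1)
    (v : P → E) (h : E) :
    ‖∑ p, w p • (⟪v p, h⟫ • v p) - ⟪∑ p, w p • v p, h⟫ • ∑ p, w p • v p‖
      ≤ (∑ p, w p * ‖v p‖ ^ 2) * ‖h‖ := by
  set μ := ∑ p, w p • v p
  have hμ : ∀ y, ∑ p, w p * ⟪v p, y⟫ = ⟪μ, y⟫ := fun y => by
    simp [μ, sum_inner, inner_smul_left]
  have centered : ∑ p, w p • (⟪v p, h⟫ • v p) - ⟪μ, h⟫ • μ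
      = ∑ p, w p • (⟪v p - μ, h⟫ • (v p - μ)) := by
    have e1 : ∑ p, (w p * ⟪μ, h⟫) • v p = ⟪μ, h⟫ • μ := by
      simp only [μ, Finset.smul_sum, smul_smul, mul_comm]
    have e2 : ∑ p, (w p * ⟪v p, h⟫) • μ = ⟪μ, h⟫ • μ := by rw [← Finset.sum_smul, hμ]
    have e3 : ∑ p, (w p * ⟪μ, h⟫) • μ = ⟪μ, h⟫ • μ := by
      rw [← Finset.sum_smul, ← Finset.sum_mul, hw₁, one_mul]
    simp only [inner_sub_left, sub_smul, smul_sub, Finset.sum_sub_distrib, smul_smul, e1, e2, e3]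
    abel
  have variance : ∑ p, w p * ‖v p - μ‖ ^ 2 = ∑ p, w p * ‖v p‖ ^ 2 - ‖μ‖ ^ 2 := by
    simp only [norm_sub_sq_real, mul_add, mul_sub, Finset.sum_add_distrib, Finset.sum_sub_distrib,
      ← Finset.sum_mul, hw₁, mul_left_comm _ (2 : ℝ), ← Finset.mul_sum, hμ,
      real_inner_self_eq_norm_sq]
    ring
  rw [centered]
  refine (norm_sum_smul_inner_smul_le hw _ h).trans ?_
  rw [variance]
  gcongr
  linarith [sq_nonneg ‖μ‖]

variable (a : P → E) (b : P → ℝ)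

noncomputable def expSum (x : E) : ℝ := ∑ p, exp (⟪a p, x⟫ + b p)

noncomputable def expSumGrad (x : E) : E := ∑ p, exp (⟪a p, x⟫ + b p) • a p

noncomputable def expSumHess (x : E) : E →L[ℝ] E :=
  ∑ p, exp (⟪a p, x⟫ + b p) • (innerSL ℝ (a p)).smulRight (a p)

noncomputable def gibbsMean (x : E) : E := (expSum a b x)⁻¹ • expSumGrad a b x

theorem expSum_pos [Nonempty P] (x : E) : 0 < expSum a b x :=
  Finset.sum_pos (fun _ _ => exp_pos _) Finset.univ_nonempty

theorem continuous_expSum : Continuous (expSum a b) := by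
  unfold expSum; fun_prop

theorem convexOn_expSum : ConvexOn ℝ univ (expSum a b) := by
  have hsum : expSum a b = ∑ p, fun x => exp (⟪a p, x⟫ + b p) := by ext; simp [expSum]
  rw [hsum]
  refine Finset.sum_induction _ (ConvexOn ℝ univ) (fun _ _ => ConvexOn.add)
    (convexOn_const 0 convex_univ) fun p _ => ?_
  exact convexOn_exp.comp_affineMap
    ((innerSL ℝ (a p)).toLinearMap.toAffineMap + AffineMap.const ℝ E (b p))

theorem hasFDerivAt_exp_inner_add (v : E) (c : ℝ) (x : E) :
    HasFDerivAt (fun y => exp (⟪v, y⟫ + c)) (exp (⟪v, x⟫ + c) • innerSL ℝ v) x :=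
  ((innerSL ℝ v).hasFDerivAt.add_const c).exp

theorem hasFDerivAt_expSum (x : E) :
    HasFDerivAt (expSum a b) (innerSL ℝ (expSumGrad a b x)) x := by
  refine (HasFDerivAt.fun_sum fun p _ => hasFDerivAt_exp_inner_add (a p) (b p) x).congr_fderiv ?_
  simp [expSumGrad, map_sum]

theorem hasFDerivAt_expSumGrad (x : E) :
    HasFDerivAt (expSumGrad a b) (expSumHess a b x) x := by
  refine (HasFDerivAt.fun_sum fun p _ =>
    (hasFDerivAt_exp_inner_add (a p) (b p) x).smul_const (a p)).congr_fderiv ?_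
  ext h
  simp [expSumHess, smul_smul]

theorem expSumHess_apply (x h : E) :
    expSumHess a b x h = ∑ p, exp (⟪a p, x⟫ + b p) • (⟪a p, h⟫ • a p) := by
  simp [expSumHess]

noncomputable def gibbsCov (x : E) : E →L[ℝ] E :=
  (expSum a b x)⁻¹ • expSumHess a b x - (innerSL ℝ (gibbsMean a b x)).smulRight (gibbsMean a b x)

theorem hasFDerivAt_gibbsMean [Nonempty P] (x : E) :
    HasFDerivAt (gibbsMean a b) (gibbsCov a b x) x := by
  have hs := (expSum_pos a b x).ne'
  refine (((hasDerivAt_inv hs).comp_hasFDerivAt x (hasFDerivAt_expSum a b x)).smul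
    (hasFDerivAt_expSumGrad a b x)).congr_fderiv ?_
  ext h
  simp only [gibbsCov, gibbsMean, add_apply, sub_apply, smul_apply, neg_apply, Function.comp_apply,
    ContinuousLinearMap.smulRight_apply, coe_innerSL_apply, smul_eq_mul, neg_smul, map_smul,
    smul_smul]
  module

theorem hasFDerivAt_linLog_expSum [Nonempty P] (x : E) :
    HasFDerivAt (fun y => linLog (expSum a b y))
      (innerSL ℝ (min 1 (expSum a b x)⁻¹ • expSumGrad a b x)) x := by
  refine ((hasDerivAt_linLog (expSum_pos a b x)).comp_hasFDerivAt x
    (hasFDerivAt_expSum a b x)).congr_fderiv ?_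
  ext h
  simp

variable {a} {R : ℝ≥0}

theorem norm_expSumHess_le (hR : ∀ p, ‖a p‖ ≤ R) (x : E) :
    ‖expSumHess a b x‖ ≤ R ^ 2 * expSum a b x := by
  have hs : 0 ≤ expSum a b x := Finset.sum_nonneg fun _ _ => (exp_pos _).le
  refine ContinuousLinearMap.opNorm_le_bound _ (by positivity) fun h => ?_
  rw [expSumHess_apply]
  refine (norm_sum_smul_inner_smul_le (fun p => (exp_pos _).le) a h).trans ?_
  gcongr
  rw [expSum, Finset.mul_sum]
  refine Finset.sum_le_sum fun p _ => ?_
  rw [mul_comm]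
  gcongr
  exact hR p

theorem norm_gibbsCov_le [Nonempty P] (hR : ∀ p, ‖a p‖ ≤ R) (x : E) :
    ‖gibbsCov a b x‖ ≤ R ^ 2 := by
  set w : P → ℝ := fun p => (expSum a b x)⁻¹ * exp (⟪a p, x⟫ + b p)
  have hw : ∀ p, 0 ≤ w p := fun p => by have := expSum_pos a b x; positivity
  have hw₁ : ∑ p, w p = 1 := by
    rw [← Finset.mul_sum]; exact inv_mul_cancel₀ (expSum_pos a b x).ne'
  have hμ : gibbsMean a b x = ∑ p, w p • a p := by
    simp only [gibbsMean, expSumGrad, Finset.smul_sum, smul_smul, w]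
  refine ContinuousLinearMap.opNorm_le_bound _ (sq_nonneg R) fun h => ?_
  have hcov : gibbsCov a b x h
      = ∑ p, w p • (⟪a p, h⟫ • a p) - ⟪∑ p, w p • a p, h⟫ • ∑ p, w p • a p := by
    simp only [gibbsCov, sub_apply, smul_apply, expSumHess_apply,
      ContinuousLinearMap.smulRight_apply, innerSL_apply_apply, hμ, Finset.smul_sum, smul_smul,
      mul_assoc, w]
  rw [hcov]
  refine (norm_sum_smul_inner_smul_sub_le hw hw₁ a h).trans ?_
  gcongr
  calc ∑ p, w p * ‖a p‖ ^ 2 ≤ ∑ p, w p * R ^ 2 := by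
        gcongr with p
        exacts [hw p, hR p]
    _ = R ^ 2 := by rw [← Finset.sum_mul, hw₁, one_mul]

theorem lipschitzOnWith_expSumGrad (hR : ∀ p, ‖a p‖ ≤ R) (c : ℝ≥0) :
    LipschitzOnWith (R ^ 2 * c) (expSumGrad a b) {x | expSum a b x ≤ c} := by
  have hconv : Convex ℝ {x | expSum a b x ≤ c} := by
    simpa using (convexOn_expSum a b).convex_le c
  refine hconv.lipschitzOnWith_of_nnnorm_hasFDerivWithin_le
    (fun x _ => (hasFDerivAt_expSumGrad a b x).hasFDerivWithinAt) fun x hx => ?_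
  rw [← NNReal.coe_le_coe, coe_nnnorm, NNReal.coe_mul, NNReal.coe_pow]
  exact (norm_expSumHess_le b hR x).trans (by gcongr; exact hx)

theorem lipschitzWith_gibbsMean [Nonempty P] (hR : ∀ p, ‖a p‖ ≤ R) :
    LipschitzWith (R ^ 2) (gibbsMean a b) := by
  rw [← lipschitzOnWith_univ]
  refine convex_univ.lipschitzOnWith_of_nnnorm_hasFDerivWithin_le
    (fun x _ => (hasFDerivAt_gibbsMean a b x).hasFDerivWithinAt) fun x _ => ?_
  rw [← NNReal.coe_le_coe, coe_nnnorm, NNReal.coe_pow]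
  exact norm_gibbsCov_le b hR x

theorem lipschitzWith_min_one_inv_smul_expSumGrad [Nonempty P] (hR : ∀ p, ‖a p‖ ≤ R) :
    LipschitzWith (R ^ 2) fun x => min 1 (expSum a b x)⁻¹ • expSumGrad a b x := by
  refine LipschitzWith.of_lipschitzOnWith_le_ge (continuous_expSum a b) (c := 1) ?_ ?_
  · have hle := lipschitzOnWith_expSumGrad b hR 1
    rw [NNReal.coe_one, mul_one] at hle
    refine hle.congr fun x hx => ?_
    rw [min_eq_left (one_le_inv_iff₀.2 ⟨expSum_pos a b x, hx⟩), one_smul]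
  · refine (lipschitzWith_gibbsMean b hR).lipschitzOnWith.congr fun x hx => ?_
    rw [min_eq_right (inv_le_one_of_one_le₀ hx)]
    rfl

end ExpSum

section Sinkhorn

variable {Ma Mb : ℕ}

noncomputable def pairVec (p : Fin Ma × Fin Mb) : EuclideanSpace ℝ (Fin Ma ⊕ Fin Mb) :=
  EuclideanSpace.single (Sum.inl p.1) 1 + EuclideanSpace.single (Sum.inr p.2) 1

theorem inner_pairVec (p : Fin Ma × Fin Mb) (x : EuclideanSpace ℝ (Fin Ma ⊕ Fin Mb)) :
    ⟪pairVec p, x⟫ = x (Sum.inl p.1) + x (Sum.inr p.2) := by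
  simp [pairVec, inner_add_left, EuclideanSpace.inner_single_left]

theorem norm_pairVec (p : Fin Ma × Fin Mb) : ‖pairVec p‖ = √2 := by
  rw [← Real.sqrt_sq (norm_nonneg _), pairVec, norm_add_sq_real]
  simp [EuclideanSpace.inner_single_left, one_add_one_eq_two]

theorem sQE_eq_expSum (C : Matrix (Fin Ma) (Fin Mb) ℝ) (lam : ℝ) :
    sQE C lam = expSum (fun p => lam • pairVec p) (fun p => -(lam * C p.1 p.2) - 1) := by
  ext x
  rw [sQE, expSum, Fintype.sum_prod_type]
  simp only [real_inner_smul_left, inner_pairVec]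
  congr! 3
  ring

theorem FconjE_eq (C : Matrix (Fin Ma) (Fin Mb) ℝ) (lam N : ℝ) :
    FconjE C lam N = fun x => N / lam * linLog (sQE C lam x) := by
  ext x
  unfold FconjE linLog
  split_ifs <;> ring

end Sinkhorn

/-- (Proposition 2) The gradient of the conjugate `F` of the normalized
Sinkhorn distance is Lipschitz continuous with constant at most `2λN`
(Euclidean norms on `ℝ^{Ma}×ℝ^{Mb} ≅ ℝ^{Ma+Mb}`). -/
theorem gradient_Fconj_lipschitz (Ma Mb : ℕ) (hMa : 0 < Ma) (hMb : 0 < Mb)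
    (C : Matrix (Fin Ma) (Fin Mb) ℝ) (lam N : ℝ) (hlam : 0 < lam) (hN : 0 < N) :
    ∀ X X' : EuclideanSpace ℝ (Fin Ma ⊕ Fin Mb),
      ‖gradient (FconjE C lam N) X - gradient (FconjE C lam N) X'‖
        ≤ 2 * lam * N * ‖X - X'‖ := by
  have : Nonempty (Fin Ma × Fin Mb) := ⟨(⟨0, hMa⟩, ⟨0, hMb⟩)⟩
  set a := fun p : Fin Ma × Fin Mb => lam • pairVec p
  set b := fun p : Fin Ma × Fin Mb => -(lam * C p.1 p.2) - 1
  have hR : ∀ p, ‖a p‖ ≤ (‖lam‖₊ * NNReal.sqrt 2 : ℝ≥0) := fun p => by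
    simp [a, norm_smul, norm_pairVec]
  have hgrad : gradient (FconjE C lam N)
      = fun x => (N / lam) • min 1 (expSum a b x)⁻¹ • expSumGrad a b x := by
    refine gradient_eq fun x => hasGradientAt_iff_hasFDerivAt.2 ?_
    rw [FconjE_eq, sQE_eq_expSum]
    refine ((hasFDerivAt_linLog_expSum a b x).const_mul (N / lam)).congr_fderiv ?_
    ext h
    simp
  have hlip := (lipschitzWith_smul (β := EuclideanSpace ℝ (Fin Ma ⊕ Fin Mb)) (N / lam)).comp
    (lipschitzWith_min_one_inv_smul_expSumGrad b hR)
  intro X X'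
  rw [hgrad]
  refine (hlip.norm_sub_le X X').trans_eq ?_
  congr 1
  push_cast
  rw [mul_pow, Real.sq_sqrt zero_le_two, Real.norm_of_nonneg hlam.le,
    Real.norm_of_nonneg (by positivity)]
  field_simp
end

section
/- (Proposition 3) Let m be a positive integer, τ > 0, λ > 0, N > 0, and c ∈ ℝ^m. Define g*_λ(q) = (N/λ)·∑_{k=1}^m e^{λ(q_k − c_k) − 1}. Then for every p ∈ ℝ^m, the function q ↦ ‖q − p‖²/(2τ) + g*_λ(q) has a unique minimizer q* = prox_{τ g*_λ}(p), given coordinatewise by q*_k = p_k − (1/λ)·W(λτN·e^{λ(p_k − c_k) − 1}), where W(z) denotes the unique real solution w ≥ 0 of w·e^w = z for z ≥ 0. -/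
/-!
The objective is separable, and in each coordinate the candidate `q_k` built from the Lambert
value `w_k` satisfies the stationarity condition `p_k − q_k = τ N e^{λ(q_k − c_k) − 1}`, i.e.
`q_k = p_k − τ s_k` with `s_k` the derivative of the exponential term at `q_k`. Convexity of the
exponential (`1 + t ≤ eᵗ`) makes `s_k` a subgradient, and expanding the square then gives the
three-point inequality `F(q) + ‖x − q‖²/(2τ) ≤ F(x)`, which yields both minimality and uniqueness.
-/

open scoped BigOperators

/-- The conjugate Sinkhorn term `g*_λ(q) = (N/λ)·∑_k e^{λ(q_k − c_k) − 1}`. -/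
noncomputable def gStar {m : ℕ} (lam N : ℝ) (c q : Fin m → ℝ) : ℝ :=
  (N / lam) * ∑ k, Real.exp (lam * (q k - c k) - 1)

open Real

noncomputable def proxObjective {m : ℕ} (tau lam N : ℝ) (c p q : Fin m → ℝ) : ℝ :=
  (∑ k, (q k - p k) ^ 2) / (2 * tau) + gStar lam N c q

lemma exists_nonneg_mul_exp_eq {z : ℝ} (hz : 0 ≤ z) : ∃ w, 0 ≤ w ∧ w * exp w = z := by
  have hcont : ContinuousOn (fun w : ℝ => w * exp w) (Set.Icc 0 z) := by fun_prop
  have hz_mem : z ∈ Set.Icc (0 * exp 0) (z * exp z) :=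
    ⟨by simpa using hz, le_mul_of_one_le_right hz (one_le_exp hz)⟩
  obtain ⟨w, hw, hw_eq⟩ := intermediate_value_Icc hz hcont hz_mem
  exact ⟨w, hw.1, hw_eq⟩

lemma sq_div_add_le_of_subgradient {f : ℝ → ℝ} {tau p q s x : ℝ} (htau : tau ≠ 0)
    (hq : p - q = tau * s) (hs : f q + s * (x - q) ≤ f x) :
    (q - p) ^ 2 / (2 * tau) + f q + (x - q) ^ 2 / (2 * tau)
      ≤ (x - p) ^ 2 / (2 * tau) + f x := by
  have hsq : (x - p) ^ 2 / (2 * tau)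
      = (q - p) ^ 2 / (2 * tau) + (x - q) ^ 2 / (2 * tau) - s * (x - q) := by
    rw [show p = q + tau * s by linarith]
    field_simp
    ring
  linarith

lemma exp_affine_add_deriv_mul_le {lam N : ℝ} (hlam : 0 < lam) (hN : 0 ≤ N) (c q x : ℝ) :
    N / lam * exp (lam * (q - c) - 1) + N * exp (lam * (q - c) - 1) * (x - q)
      ≤ N / lam * exp (lam * (x - c) - 1) := by
  have htangent : 1 + lam * (x - q) ≤ exp (lam * (x - q)) := by
    linarith [add_one_le_exp (lam * (x - q))]
  have hsplit : exp (lam * (x - c) - 1) = exp (lam * (q - c) - 1) * exp (lam * (x - q)) := by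
    rw [← exp_add]; ring_nf
  calc N / lam * exp (lam * (q - c) - 1) + N * exp (lam * (q - c) - 1) * (x - q)
      = N / lam * exp (lam * (q - c) - 1) * (1 + lam * (x - q)) := by
        field_simp
    _ ≤ N / lam * exp (lam * (q - c) - 1) * exp (lam * (x - q)) := by
        gcongr
    _ = N / lam * exp (lam * (x - c) - 1) := by
        rw [hsplit, mul_assoc]

lemma sub_eq_of_mul_exp_eq {lam tau N p c w : ℝ} (hlam : lam ≠ 0)
    (hw : w * exp w = lam * tau * N * exp (lam * (p - c) - 1)) :
    p - (p - 1 / lam * w) = tau * (N * exp (lam * ((p - 1 / lam * w) - c) - 1)) := by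
  have hexp : lam * ((p - 1 / lam * w) - c) - 1 = (lam * (p - c) - 1) - w := by
    field_simp
    ring
  rw [hexp, exp_sub]
  field_simp
  linear_combination hw

lemma proxObjective_add_le {m : ℕ} {tau lam N : ℝ} (htau : 0 < tau) (hlam : 0 < lam)
    (hN : 0 ≤ N) {c p q : Fin m → ℝ}
    (hstat : ∀ k, p k - q k = tau * (N * exp (lam * (q k - c k) - 1))) (x : Fin m → ℝ) :
    proxObjective tau lam N c p q + (∑ k, (x k - q k) ^ 2) / (2 * tau)
      ≤ proxObjective tau lam N c p x := by
  unfold proxObjective gStar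
  simp only [Finset.sum_div, Finset.mul_sum, ← Finset.sum_add_distrib]
  refine Finset.sum_le_sum fun k _ => ?_
  exact sq_div_add_le_of_subgradient (f := fun y => N / lam * exp (lam * (y - c k) - 1))
    htau.ne' (hstat k) (exp_affine_add_deriv_mul_le hlam hN (c k) (q k) (x k))

lemma eq_of_sum_sq_div_nonpos {ι : Type*} [Fintype ι] {tau : ℝ} (htau : 0 < tau)
    {x q : ι → ℝ} (h : (∑ k, (x k - q k) ^ 2) / (2 * tau) ≤ 0) : x = q := by
  have hsum : ∑ k, (x k - q k) ^ 2 = 0 :=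
    le_antisymm (((div_le_iff₀ (by positivity)).1 h).trans_eq (zero_mul _)) (by positivity)
  funext k
  have hk := congrFun ((Fintype.sum_eq_zero_iff_of_nonneg fun k => sq_nonneg _).1 hsum) k
  simpa [sub_eq_zero] using hk

theorem prox_sinkhorn_general (m : ℕ) (tau lam N : ℝ)
    (htau : 0 < tau) (hlam : 0 < lam) (hN : 0 < N)
    (c p : Fin m → ℝ) :
    (∃! q : Fin m → ℝ, ∀ q' : Fin m → ℝ,
        (∑ k, (q k - p k) ^ 2) / (2 * tau) + gStar lam N c q
          ≤ (∑ k, (q' k - p k) ^ 2) / (2 * tau) + gStar lam N c q') ∧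
    (∀ q : Fin m → ℝ,
      (∀ q' : Fin m → ℝ,
        (∑ k, (q k - p k) ^ 2) / (2 * tau) + gStar lam N c q
          ≤ (∑ k, (q' k - p k) ^ 2) / (2 * tau) + gStar lam N c q') →
      ∀ k, ∃ w : ℝ, 0 ≤ w ∧
        w * Real.exp w = lam * tau * N * Real.exp (lam * (p k - c k) - 1) ∧
        q k = p k - (1 / lam) * w) := by
  choose w hw_nonneg hw_eq using fun k =>
    exists_nonneg_mul_exp_eq (z := lam * tau * N * exp (lam * (p k - c k) - 1)) (by positivity)
  set q : Fin m → ℝ := fun k => p k - 1 / lam * w k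
  have hstat k : p k - q k = tau * (N * exp (lam * (q k - c k) - 1)) :=
    sub_eq_of_mul_exp_eq hlam.ne' (hw_eq k)
  have hthree := proxObjective_add_le htau hlam hN.le hstat
  have hmin x : proxObjective tau lam N c p q ≤ proxObjective tau lam N c p x :=
    (le_add_of_nonneg_right (by positivity)).trans (hthree x)
  have huniq y (hy : ∀ x, proxObjective tau lam N c p y ≤ proxObjective tau lam N c p x) :
      y = q :=
    eq_of_sum_sq_div_nonpos htau (by linarith [hthree y, hy q])
  exact ⟨⟨q, hmin, huniq⟩, fun y hy k => ⟨w k, hw_nonneg k, hw_eq k, by rw [huniq y hy]⟩⟩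

/-- (Proposition 3) For `τ, λ, N > 0` and `c, p ∈ ℝ^m`, the function
`q ↦ ‖q − p‖²/(2τ) + g*_λ(q)` (Euclidean norm, written with its square
`∑_k (q_k − p_k)²`) has a unique minimizer `q* = prox_{τ g*_λ}(p)`, given
coordinatewise by `q*_k = p_k − (1/λ)·W(λτN·e^{λ(p_k − c_k) − 1})`, where `W(z)`
is the unique `w ≥ 0` with `w·e^w = z`. -/
theorem prox_sinkhorn (m : ℕ) (hm : 0 < m) (tau lam N : ℝ)
    (htau : 0 < tau) (hlam : 0 < lam) (hN : 0 < N)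
    (c p : Fin m → ℝ) :
    (∃! q : Fin m → ℝ, ∀ q' : Fin m → ℝ,
        (∑ k, (q k - p k) ^ 2) / (2 * tau) + gStar lam N c q
          ≤ (∑ k, (q' k - p k) ^ 2) / (2 * tau) + gStar lam N c q') ∧
    (∀ q : Fin m → ℝ,
      (∀ q' : Fin m → ℝ,
        (∑ k, (q k - p k) ^ 2) / (2 * tau) + gStar lam N c q
          ≤ (∑ k, (q' k - p k) ^ 2) / (2 * tau) + gStar lam N c q') →
      ∀ k, ∃ w : ℝ, 0 ≤ w ∧
        w * Real.exp w = lam * tau * N * Real.exp (lam * (p k - c k) - 1) ∧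
        q k = p k - (1 / lam) * w) :=
  prox_sinkhorn_general m tau lam N htau hlam hN c p
end
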